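/- Let (b_n)_{n≥1} be the paperfolding sequence. Then 496·∑_{n≥1} (2b_n − 1)/n⁵ = −(5/3)·π⁵. -/

import Mathlib

/-- Even-index Euler numbers: `E2 k = E_{2k}`, where `1/cosh t = ∑ E_n t^n/n!`
(equivalently, `E_0 = 1`, odd-index Euler numbers vanish, and
`∑_{j≤n} C(2n,2j) E_{2j} = 0` for `n ≥ 1`). -/
def E2 : ℕ → ℤ
  | 0 => 1
  | n + 1 => -∑ k ∈ (Finset.range (n+1)).attach,
      ((2*(n+1)).choose (2*k.1) : ℤ) * E2 k.1
decreasing_by exact Finset.mem_range.mp k.2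

/-- Thue–Morse sequence: `tm 0 = 0`, `tm (2n) = tm n`, `tm (2n+1) = 1 - tm n`. -/
def tm : ℕ → ℕ
  | 0 => 0
  | n + 1 => if (n+1) % 2 = 0 then tm ((n+1)/2) else 1 - tm ((n+1)/2)
decreasing_by all_goals exact Nat.div_lt_self (Nat.succ_pos n) one_lt_two

/-- Paperfolding (dragon-curve) sequence: `pf (2n) = pf n`, `pf (4n+1) = 0`,
`pf (4n+3) = 1` (with `pf 0 = 0`). -/
def pf : ℕ → ℕ
  | 0 => 0
  | n + 1 => if (n+1) % 2 = 0 then pf ((n+1)/2) else if (n+1) % 4 = 1 then 0 else 1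
decreasing_by exact Nat.div_lt_self (Nat.succ_pos n) one_lt_two

open Real
lemma pf_two_mul (k : ℕ) : pf (2*k) = pf k := by
  match k with
  | 0 => rfl
  | k+1 =>
    rw [show 2*(k+1) = (2*k+1)+1 by ring, pf]
    have h2 : (2*k+1+1) % 2 = 0 := by omega
    rw [if_pos h2]
    congr 1
    omega

lemma pf_odd (k : ℕ) : pf (2*k+1) = if k % 2 = 0 then 0 else 1 := by
  rw [show 2*k+1 = (2*k)+1 from rfl, pf]
  have h2 : (2*k+1) % 2 ≠ 0 := by omega
  rw [if_neg h2]
  rcases Nat.even_or_odd k with ⟨m,hm⟩ | ⟨m,hm⟩ <;> subst hm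
  · have h4 : (2*(m+m)+1) % 4 = 1 := by omega
    rw [if_pos h4, if_pos (by omega)]
  · have h4 : (2*(2*m+1)+1) % 4 ≠ 1 := by omega
    rw [if_neg h4, if_neg (by omega)]

lemma pf_le_one : ∀ n, pf n ≤ 1 := by
  intro n
  induction n using Nat.strong_induction_on with
  | _ n ih =>
    match n with
    | 0 => simp [pf]
    | m+1 =>
      rw [pf]
      split
      · exact ih _ (Nat.div_lt_self (Nat.succ_pos m) one_lt_two)
      · split <;> omega

lemma bern5_eval : (Polynomial.bernoulli 5).eval (1/4 : ℚ) = -25/1024 := by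
  simp_rw [Polynomial.bernoulli, Finset.sum_range_succ, Polynomial.eval_add,
    Polynomial.eval_monomial]
  rw [Finset.sum_range_zero, Polynomial.eval_zero, zero_add, bernoulli_one,
    bernoulli_eq_bernoulli'_of_ne_one zero_ne_one, bernoulli'_zero,
    bernoulli_eq_bernoulli'_of_ne_one (by decide : 2 ≠ 1), bernoulli'_two,
    bernoulli_eq_bernoulli'_of_ne_one (by decide : 3 ≠ 1), bernoulli'_three,
    bernoulli_eq_bernoulli'_of_ne_one (by decide : 4 ≠ 1), bernoulli'_four,
    bernoulli_eq_bernoulli'_of_ne_one (by decide : 5 ≠ 1),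
    bernoulli'_eq_zero_of_odd (by decide) (by norm_num)]
  norm_num [Nat.choose]

lemma hasSum_beta5 :
    HasSum (fun n : ℕ => 1/(n:ℝ)^5 * Real.sin (2*π*n*(1/4))) (5*π^5/1536) := by
  have h := hasSum_one_div_nat_pow_mul_sin (k := 2) two_ne_zero
    (x := 1/4) (by norm_num [Set.mem_Icc])
  have hv : ((-1 : ℝ) ^ (2 + 1) * (2 * π) ^ (2 * 2 + 1) / 2 / ((2 * 2 + 1).factorial : ℝ) *
      (Polynomial.map (algebraMap ℚ ℝ) (Polynomial.bernoulli (2 * 2 + 1))).eval (1/4 : ℝ))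
      = 5*π^5/1536 := by
    rw [show ((1:ℝ)/4) = (algebraMap ℚ ℝ) (1/4 : ℚ) by norm_num, Polynomial.eval_map,
      Polynomial.eval₂_at_apply, show 2*2+1 = 5 from rfl, bern5_eval]
    norm_num [Nat.factorial]
    ring
  rw [hv] at h
  exact h

noncomputable def gpf (n : ℕ) : ℝ := (2*(pf n : ℝ) - 1)/(n : ℝ)^5

lemma summable_gpf : Summable gpf := by
  have hs : Summable (fun n : ℕ => 1/(n:ℝ)^5) :=
    Real.summable_one_div_nat_pow.mpr (by norm_num)
  apply Summable.of_norm_bounded hs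
  intro n
  rcases n with _|m
  · simp [gpf]
  · have h1 : ((pf (m+1) : ℝ)) ≤ 1 := by exact_mod_cast pf_le_one (m+1)
    have h0 : (0:ℝ) ≤ (pf (m+1) : ℝ) := by positivity
    have hc : |2*(pf (m+1):ℝ) - 1| ≤ 1 := by
      rw [abs_le]; constructor <;> linarith
    have hp : (0:ℝ) < ((m+1 : ℕ) : ℝ)^5 := by positivity
    rw [gpf, Real.norm_eq_abs, abs_div, abs_of_pos hp]
    exact div_le_div_of_nonneg_right hc hp.le

lemma gpf_two_mul (k : ℕ) : gpf (2*k) = gpf k / 32 := by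
  rw [gpf, gpf, pf_two_mul]
  have h : ((2*k : ℕ) : ℝ)^5 = 32*(k:ℝ)^5 := by push_cast; ring
  rw [h, div_div]
  ring_nf

theorem paperfolding_fifth_pi :
    496 * ∑' n : ℕ, (2 * (pf (n+1) : ℝ) - 1) / ((n:ℝ) + 1) ^ 5 =
      -(5/3) * Real.pi ^ 5 := by
  set S := ∑' n, gpf n with hS
  -- even part
  have he : HasSum (fun k => gpf (2*k)) (S/32) := by
    simpa only [gpf_two_mul] using summable_gpf.hasSum.div_const 32
  -- odd part of the beta series
  set h : ℕ → ℝ := fun n => 1/(n:ℝ)^5 * Real.sin (2*π*n*(1/4)) with hh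
  have heven : HasSum (fun k => h (2*k)) 0 := by
    have : (fun k : ℕ => h (2*k)) = fun _ => (0:ℝ) := by
      funext k
      have harg : 2*π*((2*k : ℕ):ℝ)*(1/4) = (k:ℝ)*π := by push_cast; ring
      have hk : h (2*k) = 1/((2*k : ℕ):ℝ)^5 * Real.sin (2*π*((2*k : ℕ):ℝ)*(1/4)) := rfl
      rw [hk, harg, Real.sin_nat_mul_pi, mul_zero]
    rw [this]
    exact hasSum_zero
  have hsumodd : Summable (fun k => h (2*k+1)) :=
    hasSum_beta5.summable.comp_injective (fun a b hab => by omega)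
  have hodd : HasSum (fun k => h (2*k+1)) (5*π^5/1536) := by
    have h1 := heven.even_add_odd hsumodd.hasSum
    rw [zero_add] at h1
    rw [← h1.unique hasSum_beta5]
    exact hsumodd.hasSum
  -- sin values at odd arguments
  have hsin : ∀ k : ℕ, Real.sin (2*π*((2*k+1 : ℕ):ℝ)*(1/4)) = (-1)^k := by
    intro k
    have harg : 2*π*((2*k+1 : ℕ):ℝ)*(1/4) = (k:ℝ)*π + π/2 := by push_cast; ring
    rw [harg, Real.sin_add_pi_div_two]
    simpa using Real.cos_add_nat_mul_pi 0 k
  have hkey : ∀ k : ℕ, gpf (2*k+1) = -(h (2*k+1)) := by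
    intro k
    rw [gpf, pf_odd, hh]
    simp only
    rw [hsin]
    rcases Nat.even_or_odd k with hke | hko
    · rw [if_pos (Nat.even_iff.mp hke), hke.neg_one_pow]
      push_cast; ring
    · rw [if_neg (by have := Nat.odd_iff.mp hko; omega), hko.neg_one_pow]
      push_cast; ring
  have ho : HasSum (fun k => gpf (2*k+1)) (-(5*π^5/1536)) := by
    simpa only [hkey] using hodd.neg
  have htot : HasSum gpf (S/32 + -(5*π^5/1536)) := he.even_add_odd ho
  have hSeq : S = S/32 + -(5*π^5/1536) := summable_gpf.hasSum.unique htot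
  have hgoal : ∑' n : ℕ, (2 * (pf (n+1) : ℝ) - 1) / ((n:ℝ) + 1) ^ 5 = S := by
    have h0 : S = gpf 0 + ∑' n, gpf (n+1) := Summable.tsum_eq_zero_add summable_gpf
    have hg0 : gpf 0 = 0 := by simp [gpf]
    rw [hg0, zero_add] at h0
    rw [h0]
    exact tsum_congr fun n => by rw [gpf]; push_cast; ring
  rw [hgoal]
  linarith [hSeq]
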